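/- The function g(x) = (1+x)·ln(1+1/x)/√(2x+1) is strictly decreasing on (0, ∞). -/

import Mathlib

/-!
With `L = log (1 + 1/x)` and `s = √(2x+1)`, the numerator `(1+x) L` has derivative `L - 1/x` and
`s' = 1/s`, so by the quotient rule `g'(x)` has the sign of `(L - 1/x) s² - (1+x) L = x L - 2 - 1/x`.
This is negative because `log (1 + y) < y` gives `x L < 1`.
-/

open Real Set

lemma hasDerivAt_one_add_mul_log_one_add_inv {x : ℝ} (hx : x ≠ 0) (hx' : 1 + x ≠ 0) :
    HasDerivAt (fun x => (1 + x) * log (1 + 1 / x)) (log (1 + 1 / x) - 1 / x) x := by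
  have hinv : HasDerivAt (fun x : ℝ => 1 + 1 / x) (-(x ^ 2)⁻¹) x := by
    simpa only [one_div] using (hasDerivAt_inv hx).const_add 1
  have hrw : 1 + 1 / x = (1 + x) / x := by field_simp; ring
  refine (((hasDerivAt_id' x).const_add 1).mul (hinv.log (by rw [hrw]; positivity))).congr_deriv ?_
  rw [hrw]
  field_simp
  ring

lemma hasDerivAt_sqrt_two_mul_add_one {x : ℝ} (hx : 0 < 2 * x + 1) :
    HasDerivAt (fun x => √(2 * x + 1)) (1 / √(2 * x + 1)) x := by
  have hlin : HasDerivAt (fun x : ℝ => 2 * x + 1) 2 x := by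
    simpa using ((hasDerivAt_id x).const_mul 2).add_const 1
  refine (hlin.sqrt hx.ne').congr_deriv ?_
  field_simp

lemma mul_log_one_add_inv_lt_one {x : ℝ} (hx : 0 < x) : x * log (1 + 1 / x) < 1 := by
  have hpos : 0 < 1 / x := by positivity
  have hlog : log (1 + 1 / x) < 1 / x := by
    linarith [log_lt_sub_one_of_pos (by positivity : 0 < 1 + 1 / x) (by linarith)]
  calc x * log (1 + 1 / x) < x * (1 / x) := mul_lt_mul_of_pos_left hlog hx
    _ = 1 := mul_one_div_cancel hx.ne'

lemma log_one_add_inv_sub_inv_mul_sub_neg {x : ℝ} (hx : 0 < x) :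
    (log (1 + 1 / x) - 1 / x) * (2 * x + 1) - (1 + x) * log (1 + 1 / x) < 0 := by
  have hexpand : (log (1 + 1 / x) - 1 / x) * (2 * x + 1) - (1 + x) * log (1 + 1 / x)
      = x * log (1 + 1 / x) - 2 - 1 / x := by
    field_simp
    ring
  have hpos : 0 < 1 / x := by positivity
  linarith [mul_log_one_add_inv_lt_one hx]

lemma HasDerivAt.div_sqrt_two_mul_add_one {f : ℝ → ℝ} {f' x : ℝ} (hf : HasDerivAt f f' x)
    (hx : 0 < 2 * x + 1) :
    HasDerivAt (fun x => f x / √(2 * x + 1)) ((f' * (2 * x + 1) - f x) / √(2 * x + 1) ^ 3) x := by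
  refine (hf.div (hasDerivAt_sqrt_two_mul_add_one hx) (sqrt_pos.mpr hx).ne').congr_deriv ?_
  field_simp
  rw [sq_sqrt hx.le]

/-- The function `g(x) = (1+x)·ln(1+1/x)/√(2x+1)` is strictly decreasing on `(0, ∞)`. -/
theorem g_strictAntiOn :
    StrictAntiOn (fun x : ℝ => (1 + x) * Real.log (1 + 1 / x) / Real.sqrt (2 * x + 1))
      (Set.Ioi 0) := by
  have hderiv (x : ℝ) (hx : 0 < x) := (hasDerivAt_one_add_mul_log_one_add_inv hx.ne'
    (by positivity)).div_sqrt_two_mul_add_one (by positivity)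
  refine strictAntiOn_of_deriv_neg (convex_Ioi 0)
    (fun x hx => (hderiv x hx).continuousAt.continuousWithinAt) (fun x hx => ?_)
  rw [interior_Ioi, mem_Ioi] at hx
  rw [(hderiv x hx).deriv]
  exact div_neg_of_neg_of_pos (log_one_add_inv_sub_inv_mul_sub_neg hx) (by positivity)
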